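/- Let k ≥ 2, let F : ℝ → {1,…,k} be a measurable classifier, let X ∈ ℝ, μ_P ∈ ℝ, and σ² > 0. Define p_j = ℙ_{Z ∼ N(X+μ_P, σ²)}(F(Z) = j) and p⁰_j = ℙ_{Z ∼ N(X, σ²)}(F(Z) = j) for j = 1,…,k. Assume p⁰_j > 0 for all j, that p has a unique maximizer j₁ with second-largest entry p_(2) = max_{j ≠ j₁} p_j > 0, and that there exists α > 0 with α ≠ 1 such that α·μ_P² / (2σ²) < −ln( 1 − p_(1) − p_(2) + 2·( (p_(1)^{1−α} + p_(2)^{1−α}) / 2 )^{1/(1−α)} ), where p_(1) = p_{j₁}. Then j₁ is also a maximizer of p⁰, i.e., p⁰_{j₁} ≥ p⁰_j for all j. -/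

import Mathlib

/-!
If some label `j` had `p⁰_j > p⁰_{j₁}`, two estimates of the Rényi divergence `D_α(p⁰ ‖ p)`
between the label distributions would clash. From above, data processing bounds it by the
Rényi divergence `α μ_P² / (2σ²)` of the two Gaussians: on each fibre `E` of `F`, Hölder's
inequality (reversed when `α > 1`) compares `∫_E q^α p^(1-α)` with `Q(E)^α P(E)^(1-α)`.
From below, among distributions `x` with `x_{j₁} ≤ x_j` the sum `∑ x^α p^(1-α)` is extremal
when `x` is proportional to `p` with `p_{j₁}` and `p_j` both replaced by their power mean of
order `1 - α` (Chebyshev's sum inequality, then Hölder again); this gives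
`D_α(p⁰ ‖ p) ≥ -log (1 - p_{j₁} - p_j + 2 M_{1-α}(p_{j₁}, p_j))`, a bound that only decreases
when `p_j` is raised to `p_(2)`.
-/

open Real Finset MeasureTheory ProbabilityTheory
open scoped ENNReal NNReal

namespace CertifiedRobustness

section Holder

variable {ι : Type*} (s : Finset ι) {α : ℝ} {x a : ι → ℝ}

theorem sum_rpow_mul_rpow_le (hα0 : 0 < α) (hα1 : α < 1) (hx : ∀ i ∈ s, 0 ≤ x i)
    (ha : ∀ i ∈ s, 0 ≤ a i) :
    ∑ i ∈ s, x i ^ α * a i ^ (1 - α) ≤ (∑ i ∈ s, x i) ^ α * (∑ i ∈ s, a i) ^ (1 - α) := by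
  have hpq : (α⁻¹).HolderConjugate (1 - α)⁻¹ :=
    Real.holderConjugate_iff.mpr ⟨one_lt_inv₀ hα0 |>.mpr hα1, by simp⟩
  have h := inner_le_Lp_mul_Lq_of_nonneg s hpq (fun i hi => rpow_nonneg (hx i hi) α)
    (fun i hi => rpow_nonneg (ha i hi) (1 - α))
  rw [sum_congr rfl fun i hi => rpow_rpow_inv (hx i hi) hα0.ne',
    sum_congr rfl fun i hi => rpow_rpow_inv (ha i hi) (sub_ne_zero.mpr hα1.ne'),
    one_div, one_div, inv_inv, inv_inv] at h
  exact h

/-- Reverse Hölder: `sum_rpow_mul_rpow_le` with the exponent `α⁻¹`, applied to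
`x ^ α * a ^ (1 - α)` and `a`. -/
theorem rpow_sum_mul_rpow_sum_le (hα : 1 < α) (hx : ∀ i ∈ s, 0 ≤ x i) (ha : ∀ i ∈ s, 0 ≤ a i)
    (hxa : ∀ i ∈ s, a i = 0 → x i = 0) :
    (∑ i ∈ s, x i) ^ α * (∑ i ∈ s, a i) ^ (1 - α) ≤ ∑ i ∈ s, x i ^ α * a i ^ (1 - α) := by
  have hα0 : 0 < α := zero_lt_one.trans hα
  set u : ι → ℝ := fun i => x i ^ α * a i ^ (1 - α)
  have hu : ∀ i ∈ s, 0 ≤ u i := fun i hi => by positivity [hx i hi, ha i hi]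
  have hx_eq : ∀ i ∈ s, u i ^ α⁻¹ * a i ^ (1 - α⁻¹) = x i := by
    intro i hi
    rcases (ha i hi).eq_or_lt with ha0 | hapos
    · simp [u, hxa i hi ha0.symm, zero_rpow hα0.ne', zero_rpow (inv_pos.mpr hα0).ne']
    · rw [mul_rpow (rpow_nonneg (hx i hi) _) (rpow_nonneg hapos.le _), rpow_rpow_inv (hx i hi)
        hα0.ne', ← rpow_mul hapos.le, mul_assoc, ← rpow_add hapos]
      field_simp
      simp
  have h := sum_rpow_mul_rpow_le s (inv_pos.mpr hα0) (inv_lt_one_of_one_lt₀ hα) hu ha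
  rw [sum_congr rfl hx_eq] at h
  rcases (sum_nonneg ha).eq_or_lt with hA | hA
  · rw [← hA, zero_rpow (sub_ne_zero.mpr hα.ne), mul_zero]
    exact sum_nonneg hu
  calc (∑ i ∈ s, x i) ^ α * (∑ i ∈ s, a i) ^ (1 - α)
      ≤ ((∑ i ∈ s, u i) ^ α⁻¹ * (∑ i ∈ s, a i) ^ (1 - α⁻¹)) ^ α * (∑ i ∈ s, a i) ^ (1 - α) := by
        gcongr
        exact sum_nonneg hx
    _ = ∑ i ∈ s, u i := by
        rw [mul_rpow (by positivity [sum_nonneg hu]) (by positivity), rpow_inv_rpow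
          (sum_nonneg hu) hα0.ne', ← rpow_mul hA.le, mul_assoc, ← rpow_add hA]
        field_simp
        simp

theorem rpow_mul_rpow_add_rpow_mul_rpow_le (hα0 : 0 < α) (hα1 : α < 1) {x y a b : ℝ}
    (hx : 0 ≤ x) (hy : 0 ≤ y) (ha : 0 ≤ a) (hb : 0 ≤ b) :
    x ^ α * a ^ (1 - α) + y ^ α * b ^ (1 - α) ≤ (x + y) ^ α * (a + b) ^ (1 - α) := by
  simpa [Fin.sum_univ_two] using sum_rpow_mul_rpow_le univ hα0 hα1 (x := ![x, y])
    (a := ![a, b]) (by simp [Fin.forall_fin_two, hx, hy]) (by simp [Fin.forall_fin_two, ha, hb])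

theorem rpow_add_mul_rpow_add_le (hα : 1 < α) {x y a b : ℝ}
    (hx : 0 ≤ x) (hy : 0 ≤ y) (ha : 0 ≤ a) (hb : 0 ≤ b) (hxa : a = 0 → x = 0)
    (hyb : b = 0 → y = 0) :
    (x + y) ^ α * (a + b) ^ (1 - α) ≤ x ^ α * a ^ (1 - α) + y ^ α * b ^ (1 - α) := by
  simpa [Fin.sum_univ_two] using rpow_sum_mul_rpow_sum_le univ hα (x := ![x, y])
    (a := ![a, b]) (by simp [Fin.forall_fin_two, hx, hy]) (by simp [Fin.forall_fin_two, ha, hb])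
    (by simpa [Fin.forall_fin_two] using ⟨hxa, hyb⟩)

end Holder

noncomputable def powerMean (s a b : ℝ) : ℝ := ((a ^ s + b ^ s) / 2) ^ (1 / s)

noncomputable def robustnessBound (α a b : ℝ) : ℝ := 1 - a - b + 2 * powerMean (1 - α) a b

section PowerMean

variable {s a b t : ℝ}

theorem powerMean_nonneg (ha : 0 ≤ a) (hb : 0 ≤ b) : 0 ≤ powerMean s a b := by
  unfold powerMean; positivity

theorem powerMean_rpow (hs : s ≠ 0) (ha : 0 ≤ a) (hb : 0 ≤ b) :
    powerMean s a b ^ s = (a ^ s + b ^ s) / 2 := by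
  rw [powerMean, one_div, rpow_inv_rpow (by positivity) hs]

theorem le_powerMean (hs : s ≠ 0) (ht : 0 < t) (hta : t ≤ a) : t ≤ powerMean s a t := by
  have ha : 0 ≤ a := ht.le.trans hta
  rcases hs.lt_or_gt with hs | hs
  · have hM : 0 < powerMean s a t := by unfold powerMean; positivity
    rw [← rpow_le_rpow_iff_of_neg hM ht hs, powerMean_rpow hs.ne ha ht.le]
    linarith [rpow_le_rpow_of_nonpos ht hta hs.le]
  · rw [← rpow_le_rpow_iff ht.le (powerMean_nonneg ha ht.le) hs, powerMean_rpow hs.ne' ha ht.le]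
    linarith [rpow_le_rpow ht.le hta hs.le]

theorem hasDerivAt_powerMean (hs : s ≠ 0) (ha : 0 ≤ a) (ht : 0 < t) :
    HasDerivAt (powerMean s a) ((powerMean s a t / t) ^ (1 - s) / 2) t := by
  have hI : 0 < (a ^ s + t ^ s) / 2 := by positivity
  have h := ((((hasDerivAt_rpow_const (p := s) (Or.inl ht.ne')).const_add (a ^ s)).div_const 2)
    |>.rpow_const (p := 1 / s) (Or.inl hI.ne'))
  refine HasDerivAt.congr_deriv (f := powerMean s a) h ?_
  rw [div_rpow (powerMean_nonneg ha ht.le) ht.le, powerMean, ← rpow_mul hI.le,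
    show s - 1 = -(1 - s) by ring, rpow_neg ht.le]
  field_simp

end PowerMean

section RobustnessBound

variable {α a b b' : ℝ}

theorem robustnessBound_pos (hα : α ≠ 1) (hb : 0 < b) (hba : b ≤ a) (ha : a ≤ 1) :
    0 < robustnessBound α a b := by
  have := le_powerMean (sub_ne_zero.mpr hα.symm) hb hba
  unfold robustnessBound; linarith

theorem robustnessBound_mono (hα0 : 0 < α) (hα1 : α ≠ 1) (hb : 0 < b) (hbb' : b ≤ b')
    (hb'a : b' ≤ a) : robustnessBound α a b ≤ robustnessBound α a b' := by
  have hs : 1 - α ≠ 0 := sub_ne_zero.mpr hα1.symm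
  have ha : 0 ≤ a := by linarith
  have hderiv : ∀ t, 0 < t → HasDerivAt (robustnessBound α a)
      (-1 + (powerMean (1 - α) a t / t) ^ α) t := fun t ht => by
    refine HasDerivAt.congr_deriv (f := robustnessBound α a) (((hasDerivAt_id' t).const_sub
      (1 - a)).add ((hasDerivAt_powerMean hs ha ht).const_mul 2)) ?_
    rw [sub_sub_cancel]
    ring
  have hmono : MonotoneOn (robustnessBound α a) (Set.Icc b a) := by
    apply monotoneOn_of_hasDerivWithinAt_nonneg (convex_Icc b a)
      (f' := fun t => -1 + (powerMean (1 - α) a t / t) ^ α)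
      (fun t ht => (hderiv t (hb.trans_le ht.1)).continuousAt.continuousWithinAt)
    all_goals rw [interior_Icc]
    · exact fun t ht => (hderiv t (hb.trans ht.1)).hasDerivWithinAt
    · intro t ht
      have ht0 : 0 < t := hb.trans ht.1
      have hM : 1 ≤ powerMean (1 - α) a t / t :=
        (one_le_div ht0).mpr (le_powerMean hs ht0 ht.2.le)
      linarith [one_le_rpow hM hα0.le]
  exact hmono ⟨le_rfl, hbb'.trans hb'a⟩ ⟨hbb', hb'a⟩ hbb'

end RobustnessBound

section TopTwoCells

variable {α x y a b : ℝ}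

/-- Chebyshev's sum inequality (`x ≤ y` and `b ≤ a` are oppositely ordered), then concavity of
`t ↦ t ^ α`. -/
theorem rpow_mul_rpow_add_rpow_mul_rpow_le_powerMean (hα0 : 0 < α) (hα1 : α < 1) (hx : 0 ≤ x)
    (hxy : x ≤ y) (hb : 0 ≤ b) (hba : b ≤ a) :
    x ^ α * a ^ (1 - α) + y ^ α * b ^ (1 - α)
      ≤ (x + y) ^ α * (2 * powerMean (1 - α) a b) ^ (1 - α) := by
  have hs : 0 < 1 - α := by linarith
  have hcheb : x ^ α * a ^ (1 - α) + y ^ α * b ^ (1 - α)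
      ≤ (x ^ α + y ^ α) * ((a ^ (1 - α) + b ^ (1 - α)) / 2) := by
    nlinarith [mul_nonneg (sub_nonneg.2 (rpow_le_rpow hx hxy hα0.le))
      (sub_nonneg.2 (rpow_le_rpow hb hba hs.le))]
  have hmid : x ^ α + y ^ α ≤ (x + y) ^ α * 2 ^ (1 - α) := by
    have := rpow_mul_rpow_add_rpow_mul_rpow_le hα0 hα1 hx (hx.trans hxy) zero_le_one zero_le_one
    norm_num at this
    exact this
  calc x ^ α * a ^ (1 - α) + y ^ α * b ^ (1 - α)
      ≤ (x ^ α + y ^ α) * ((a ^ (1 - α) + b ^ (1 - α)) / 2) := hcheb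
    _ ≤ (x + y) ^ α * 2 ^ (1 - α) * ((a ^ (1 - α) + b ^ (1 - α)) / 2) := by
        gcongr
        positivity [hb.trans hba]
    _ = (x + y) ^ α * (2 * powerMean (1 - α) a b) ^ (1 - α) := by
        rw [mul_rpow zero_le_two (powerMean_nonneg (hb.trans hba) hb),
          powerMean_rpow hs.ne' (hb.trans hba) hb]
        ring

theorem powerMean_le_rpow_mul_rpow_add_rpow_mul_rpow (hα : 1 < α) (hx : 0 ≤ x)
    (hxy : x ≤ y) (hb : 0 < b) (hba : b ≤ a) :
    (x + y) ^ α * (2 * powerMean (1 - α) a b) ^ (1 - α)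
      ≤ x ^ α * a ^ (1 - α) + y ^ α * b ^ (1 - α) := by
  have hs : 1 - α < 0 := by linarith
  have hcheb : (x ^ α + y ^ α) * ((a ^ (1 - α) + b ^ (1 - α)) / 2)
      ≤ x ^ α * a ^ (1 - α) + y ^ α * b ^ (1 - α) := by
    nlinarith [mul_nonneg (sub_nonneg.2 (rpow_le_rpow hx hxy (by linarith : (0:ℝ) ≤ α)))
      (sub_nonneg.2 (rpow_le_rpow_of_nonpos hb hba hs.le))]
  have hmid : (x + y) ^ α * 2 ^ (1 - α) ≤ x ^ α + y ^ α := by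
    have := rpow_add_mul_rpow_add_le hα hx (hx.trans hxy) zero_le_one zero_le_one
      (by norm_num) (by norm_num)
    norm_num at this
    exact this
  calc (x + y) ^ α * (2 * powerMean (1 - α) a b) ^ (1 - α)
      = (x + y) ^ α * 2 ^ (1 - α) * ((a ^ (1 - α) + b ^ (1 - α)) / 2) := by
        rw [mul_rpow zero_le_two (powerMean_nonneg (hb.le.trans hba) hb.le),
          powerMean_rpow hs.ne (hb.le.trans hba) hb.le]
        ring
    _ ≤ (x ^ α + y ^ α) * ((a ^ (1 - α) + b ^ (1 - α)) / 2) := by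
        gcongr
        positivity [hb.le.trans hba]
    _ ≤ x ^ α * a ^ (1 - α) + y ^ α * b ^ (1 - α) := hcheb

end TopTwoCells

theorem sum_eq_add_add_sum_erase_erase {ι M : Type*} [Fintype ι] [DecidableEq ι]
    [AddCommMonoid M] (f : ι → M) {i j : ι} (hij : i ≠ j) :
    ∑ l, f l = f i + f j + ∑ l ∈ (univ.erase i).erase j, f l := by
  rw [add_assoc, add_sum_erase _ _ (mem_erase.2 ⟨hij.symm, mem_univ j⟩), add_sum_erase _ _
    (mem_univ i)]

section Cells

variable {ι : Type*} [Fintype ι] {α : ℝ} {x a : ι → ℝ} {i j : ι}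

theorem sum_rpow_mul_rpow_le_robustnessBound_rpow (hα0 : 0 < α) (hα1 : α < 1)
    (hx : ∀ l, 0 ≤ x l) (ha : ∀ l, 0 ≤ a l) (hxsum : ∑ l, x l = 1) (hasum : ∑ l, a l = 1)
    (hij : i ≠ j) (hxij : x i ≤ x j) (haij : a j ≤ a i) :
    ∑ l, x l ^ α * a l ^ (1 - α) ≤ robustnessBound α (a i) (a j) ^ (1 - α) := by
  classical
  rw [sum_eq_add_add_sum_erase_erase _ hij] at hxsum hasum ⊢
  set t := (univ.erase i).erase j
  have hrest := sum_rpow_mul_rpow_le t hα0 hα1 (fun l _ => hx l) (fun l _ => ha l)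
  have htop := rpow_mul_rpow_add_rpow_mul_rpow_le_powerMean hα0 hα1 (hx i) hxij (ha j) haij
  have hxt : 0 ≤ ∑ l ∈ t, x l := sum_nonneg fun l _ => hx l
  have hat : 0 ≤ ∑ l ∈ t, a l := sum_nonneg fun l _ => ha l
  have hM : 0 ≤ 2 * powerMean (1 - α) (a i) (a j) :=
    mul_nonneg zero_le_two (powerMean_nonneg (ha i) (ha j))
  have hmerge := rpow_mul_rpow_add_rpow_mul_rpow_le hα0 hα1 (add_nonneg (hx i) (hx j)) hxt hM hat
  calc _ ≤ (x i + x j) ^ α * (2 * powerMean (1 - α) (a i) (a j)) ^ (1 - α)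
        + (∑ l ∈ t, x l) ^ α * (∑ l ∈ t, a l) ^ (1 - α) := by linarith
    _ ≤ _ := hmerge
    _ = robustnessBound α (a i) (a j) ^ (1 - α) := by
        rw [hxsum, one_rpow, one_mul, robustnessBound]
        congr 1
        linarith

theorem robustnessBound_rpow_le_sum_rpow_mul_rpow (hα : 1 < α)
    (hx : ∀ l, 0 ≤ x l) (ha : ∀ l, 0 ≤ a l) (hxa : ∀ l, a l = 0 → x l = 0)
    (hxsum : ∑ l, x l = 1) (hasum : ∑ l, a l = 1)
    (hij : i ≠ j) (hxij : x i ≤ x j) (hb : 0 < a j) (haij : a j ≤ a i) :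
    robustnessBound α (a i) (a j) ^ (1 - α) ≤ ∑ l, x l ^ α * a l ^ (1 - α) := by
  classical
  rw [sum_eq_add_add_sum_erase_erase _ hij] at hxsum hasum ⊢
  set t := (univ.erase i).erase j
  have hrest := rpow_sum_mul_rpow_sum_le t hα (fun l _ => hx l) (fun l _ => ha l)
    (fun l _ => hxa l)
  have htop := powerMean_le_rpow_mul_rpow_add_rpow_mul_rpow hα (hx i) hxij hb haij
  have hM : 0 < 2 * powerMean (1 - α) (a i) (a j) := by
    linarith [le_powerMean (by linarith : 1 - α ≠ 0) hb haij]
  have hxt : 0 ≤ ∑ l ∈ t, x l := sum_nonneg fun l _ => hx l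
  have hat : 0 ≤ ∑ l ∈ t, a l := sum_nonneg fun l _ => ha l
  have hxat : ∑ l ∈ t, a l = 0 → ∑ l ∈ t, x l = 0 := fun h =>
    sum_eq_zero fun l hl => hxa l ((sum_eq_zero_iff_of_nonneg fun l _ => ha l).1 h l hl)
  have hmerge := rpow_add_mul_rpow_add_le hα (add_nonneg (hx i) (hx j)) hxt hM.le hat
    (fun h => absurd h hM.ne') hxat
  calc robustnessBound α (a i) (a j) ^ (1 - α)
      = (x i + x j + ∑ l ∈ t, x l) ^ α
        * (2 * powerMean (1 - α) (a i) (a j) + ∑ l ∈ t, a l) ^ (1 - α) := by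
        rw [hxsum, one_rpow, one_mul, robustnessBound]
        congr 1
        linarith
    _ ≤ _ := hmerge
    _ ≤ _ := by linarith

noncomputable def renyiDiv (α : ℝ) (x a : ι → ℝ) : ℝ :=
  log (∑ i, x i ^ α * a i ^ (1 - α)) / (α - 1)

theorem neg_log_robustnessBound_le_renyiDiv (hα0 : 0 < α) (hα1 : α ≠ 1)
    (hx : ∀ l, 0 ≤ x l) (ha : ∀ l, 0 ≤ a l) (hxa : ∀ l, a l = 0 → x l = 0)
    (hxsum : ∑ l, x l = 1) (hasum : ∑ l, a l = 1)
    (hij : i ≠ j) (hxij : x i ≤ x j) (hxj : 0 < x j) (haij : a j ≤ a i) :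
    -log (robustnessBound α (a i) (a j)) ≤ renyiDiv α x a := by
  have hb : 0 < a j := (ha j).lt_of_ne fun h => hxj.ne' (hxa j h.symm)
  have hB : 0 < robustnessBound α (a i) (a j) :=
    robustnessBound_pos hα1 hb haij (hasum ▸ single_le_sum (fun l _ => ha l) (mem_univ i))
  have hS : 0 < ∑ l, x l ^ α * a l ^ (1 - α) :=
    sum_pos' (fun l _ => by positivity [hx l, ha l]) ⟨j, mem_univ j, by positivity⟩
  unfold renyiDiv
  rcases hα1.lt_or_gt with hα1 | hα1
  · have := log_le_log hS
      (sum_rpow_mul_rpow_le_robustnessBound_rpow hα0 hα1 hx ha hxsum hasum hij hxij haij)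
    rw [log_rpow hB] at this
    rw [le_div_iff_of_neg (by linarith)]
    linarith
  · have := log_le_log (rpow_pos_of_pos hB _)
      (robustnessBound_rpow_le_sum_rpow_mul_rpow hα1 hx ha hxa hxsum hasum hij hxij hb haij)
    rw [log_rpow hB] at this
    rw [le_div_iff₀ (by linarith)]
    linarith

theorem renyiDiv_le_of_exp_le (hα : α < 1) {D : ℝ}
    (h : exp ((α - 1) * D) ≤ ∑ l, x l ^ α * a l ^ (1 - α)) : renyiDiv α x a ≤ D := by
  have := log_le_log (exp_pos _) h
  rw [log_exp] at this
  rw [renyiDiv, div_le_iff_of_neg (by linarith)]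
  linarith

theorem renyiDiv_le_of_le_exp (hα : 1 < α) {D : ℝ} (hD : 0 ≤ D) (hx : ∀ l, 0 ≤ x l)
    (ha : ∀ l, 0 ≤ a l) (h : ∑ l, x l ^ α * a l ^ (1 - α) ≤ exp ((α - 1) * D)) :
    renyiDiv α x a ≤ D := by
  rw [renyiDiv, div_le_iff₀ (by linarith)]
  rcases (sum_nonneg fun l _ => by positivity [hx l, ha l] :
    0 ≤ ∑ l, x l ^ α * a l ^ (1 - α)).eq_or_lt with hS | hS
  · rw [← hS, log_zero]
    positivity
  · have := log_le_log hS h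
    rw [log_exp] at this
    linarith

theorem le_of_renyiDiv_lt_neg_log_robustnessBound (hα0 : 0 < α) (hα1 : α ≠ 1)
    (hx : ∀ l, 0 ≤ x l) (ha : ∀ l, 0 ≤ a l) (hxa : ∀ l, a l = 0 → x l = 0)
    (hxsum : ∑ l, x l = 1) (hasum : ∑ l, a l = 1) {p₂ : ℝ} (hp₂ : ∀ l ≠ i, a l ≤ p₂)
    (hp₂i : p₂ < a i) (hD : renyiDiv α x a < -log (robustnessBound α (a i) p₂)) (j : ι) :
    x j ≤ x i := by
  by_contra! hij
  have hji : j ≠ i := by rintro rfl; exact lt_irrefl _ hij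
  have hxj : 0 < x j := (hx i).trans_lt hij
  have hb : 0 < a j := (ha j).lt_of_ne fun h => hxj.ne' (hxa j h.symm)
  have hba : a j ≤ a i := (hp₂ j hji).trans hp₂i.le
  refine hD.not_ge ?_
  calc -log (robustnessBound α (a i) p₂)
      ≤ -log (robustnessBound α (a i) (a j)) := neg_le_neg (log_le_log
        (robustnessBound_pos hα1 hb hba (hasum ▸ single_le_sum (fun l _ => ha l) (mem_univ i)))
        (robustnessBound_mono hα0 hα1 hb (hp₂ j hji) hp₂i.le))
    _ ≤ renyiDiv α x a :=
        neg_log_robustnessBound_le_renyiDiv hα0 hα1 hx ha hxa hxsum hasum hji.symm hij.le hxj hba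

end Cells

section Lebesgue

variable {Ω : Type*} [MeasurableSpace Ω] {ν : Measure Ω}

theorem lintegral_eq_sum_setLIntegral_fiber {ι : Type*} [Fintype ι] [MeasurableSpace ι]
    [MeasurableSingletonClass ι] {G : Ω → ι} (hG : Measurable G) (f : Ω → ℝ≥0∞) :
    ∫⁻ ω, f ω ∂ν = ∑ i, ∫⁻ ω in G ⁻¹' {i}, f ω ∂ν := by
  have h := lintegral_iUnion (μ := ν) (fun i => hG (measurableSet_singleton i))
    (fun i j hij => (Set.disjoint_singleton.2 hij).preimage G) f
  rwa [tsum_fintype, ← Set.preimage_iUnion, Set.iUnion_of_singleton, Set.preimage_univ,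
    setLIntegral_univ] at h

/-- The duality of `rpow_sum_mul_rpow_sum_le`, with Hölder's inequality for `lintegral`. -/
theorem rpow_lintegral_mul_rpow_lintegral_le {α : ℝ} (hα : 1 < α) {f g : Ω → ℝ≥0∞}
    (hf : AEMeasurable f ν) (hg : AEMeasurable g ν) (hg0 : ∀ ω, g ω ≠ 0) (hgtop : ∀ ω, g ω ≠ ∞) :
    (∫⁻ ω, f ω ∂ν) ^ α * (∫⁻ ω, g ω ∂ν) ^ (1 - α) ≤ ∫⁻ ω, f ω ^ α * g ω ^ (1 - α) ∂ν := by
  have hα0 : 0 < α := zero_lt_one.trans hα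
  rcases eq_or_ne ν 0 with rfl | hν
  · simp [ENNReal.zero_rpow_of_pos hα0]
  have hG0 : ∫⁻ ω, g ω ∂ν ≠ 0 := by
    rw [Ne, lintegral_eq_zero_iff' hg]
    exact fun h => hν (ae_eq_bot.mp (Filter.eventually_false_iff_eq_bot.mp
      (h.mono fun ω hω => hg0 ω hω)))
  rcases eq_or_ne (∫⁻ ω, g ω ∂ν) ∞ with hGtop | hGtop
  · rw [hGtop, ENNReal.top_rpow_of_neg (by linarith), mul_zero]
    exact zero_le
  have hf_eq : ∀ ω, (f ω ^ α * g ω ^ (1 - α)) ^ α⁻¹ * g ω ^ (1 - α⁻¹) = f ω := fun ω => by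
    rw [ENNReal.mul_rpow_of_nonneg _ _ (inv_nonneg.2 hα0.le), ← ENNReal.rpow_mul,
      ← ENNReal.rpow_mul, mul_inv_cancel₀ hα0.ne', ENNReal.rpow_one, mul_assoc,
      ← ENNReal.rpow_add _ _ (hg0 ω) (hgtop ω),
      show (1 - α) * α⁻¹ + (1 - α⁻¹) = 0 by field_simp; ring, ENNReal.rpow_zero, mul_one]
  have H := ENNReal.lintegral_mul_norm_pow_le ((hf.pow_const α).mul (hg.pow_const (1 - α))) hg
    (inv_nonneg.2 hα0.le) (sub_nonneg.2 (inv_le_one_of_one_le₀ hα.le)) (add_sub_cancel _ _)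
  simp only [Pi.mul_apply, hf_eq] at H
  calc (∫⁻ ω, f ω ∂ν) ^ α * (∫⁻ ω, g ω ∂ν) ^ (1 - α)
      ≤ ((∫⁻ ω, f ω ^ α * g ω ^ (1 - α) ∂ν) ^ α⁻¹ * (∫⁻ ω, g ω ∂ν) ^ (1 - α⁻¹)) ^ α
        * (∫⁻ ω, g ω ∂ν) ^ (1 - α) := by gcongr
    _ = ∫⁻ ω, f ω ^ α * g ω ^ (1 - α) ∂ν := by
        rw [ENNReal.mul_rpow_of_nonneg _ _ hα0.le, ← ENNReal.rpow_mul, ← ENNReal.rpow_mul,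
          inv_mul_cancel₀ hα0.ne', ENNReal.rpow_one, mul_assoc, ← ENNReal.rpow_add _ _ hG0 hGtop,
          show (1 - α⁻¹) * α + (1 - α) = 0 by field_simp; ring, ENNReal.rpow_zero, mul_one]

theorem lintegral_rpow_mul_rpow_le_sum_fiber {ι : Type*} [Fintype ι] [MeasurableSpace ι]
    [MeasurableSingletonClass ι] {G : Ω → ι} (hG : Measurable G) {α : ℝ} (hα0 : 0 < α)
    (hα1 : α < 1) {f g : Ω → ℝ≥0∞} (hf : AEMeasurable f ν) (hg : AEMeasurable g ν) :
    ∫⁻ ω, f ω ^ α * g ω ^ (1 - α) ∂ν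
      ≤ ∑ i, (∫⁻ ω in G ⁻¹' {i}, f ω ∂ν) ^ α * (∫⁻ ω in G ⁻¹' {i}, g ω ∂ν) ^ (1 - α) := by
  rw [lintegral_eq_sum_setLIntegral_fiber hG]
  exact sum_le_sum fun i _ => ENNReal.lintegral_mul_norm_pow_le hf.restrict hg.restrict hα0.le
    (by linarith) (by ring)

theorem sum_fiber_le_lintegral_rpow_mul_rpow {ι : Type*} [Fintype ι] [MeasurableSpace ι]
    [MeasurableSingletonClass ι] {G : Ω → ι} (hG : Measurable G) {α : ℝ} (hα : 1 < α)
    {f g : Ω → ℝ≥0∞} (hf : AEMeasurable f ν) (hg : AEMeasurable g ν) (hg0 : ∀ ω, g ω ≠ 0)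
    (hgtop : ∀ ω, g ω ≠ ∞) :
    ∑ i, (∫⁻ ω in G ⁻¹' {i}, f ω ∂ν) ^ α * (∫⁻ ω in G ⁻¹' {i}, g ω ∂ν) ^ (1 - α)
      ≤ ∫⁻ ω, f ω ^ α * g ω ^ (1 - α) ∂ν := by
  rw [lintegral_eq_sum_setLIntegral_fiber hG]
  exact sum_le_sum fun i _ =>
    rpow_lintegral_mul_rpow_lintegral_le hα hf.restrict hg.restrict hg0 hgtop

theorem rpow_mul_rpow_ne_top {Q P : Measure Ω} [IsFiniteMeasure Q] [IsFiniteMeasure P]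
    (hQP : Q ≪ P) {α : ℝ} (hα : 0 < α) (s : Set Ω) : Q s ^ α * P s ^ (1 - α) ≠ ∞ := by
  by_cases hP : P s = 0
  · simp [hQP hP, ENNReal.zero_rpow_of_pos hα]
  · exact ENNReal.mul_ne_top (ENNReal.rpow_ne_top_of_nonneg hα.le (measure_ne_top _ _))
      (ENNReal.rpow_ne_top_of_ne_zero hP (measure_ne_top _ _))

theorem sum_measureReal_fiber {ι : Type*} [Fintype ι] [MeasurableSpace ι]
    [MeasurableSingletonClass ι] (μ : Measure Ω) [IsProbabilityMeasure μ]
    {F : Ω → ι} (hF : Measurable F) : ∑ j, μ.real (F ⁻¹' {j}) = 1 := by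
  rw [sum_measureReal_preimage_singleton _ fun j _ => hF (measurableSet_singleton j)]
  simp

end Lebesgue

section Gaussian

variable {v : ℝ≥0} (μ m : ℝ)

theorem gaussianReal_absolutelyContinuous_gaussianReal (hv : v ≠ 0) :
    gaussianReal μ v ≪ gaussianReal m v :=
  (gaussianReal_absolutelyContinuous μ hv).trans (gaussianReal_absolutelyContinuous' m hv)

theorem gaussianPDFReal_rpow_mul_rpow (hv : v ≠ 0) (α x : ℝ) :
    gaussianPDFReal μ v x ^ α * gaussianPDFReal (μ + m) v x ^ (1 - α)
      = exp ((α - 1) * (α * m ^ 2 / (2 * v))) * gaussianPDFReal (μ + (1 - α) * m) v x := by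
  have hv' : (0 : ℝ) < v := by positivity
  simp only [gaussianPDFReal]
  set C := (√(2 * π * v))⁻¹
  have hC : 0 < C := by positivity
  rw [mul_rpow hC.le (exp_nonneg _), mul_rpow hC.le (exp_nonneg _), ← exp_mul, ← exp_mul,
    show C ^ α * exp (-(x - μ) ^ 2 / (2 * v) * α) * (C ^ (1 - α)
      * exp (-(x - (μ + m)) ^ 2 / (2 * v) * (1 - α)))
      = C ^ (α + (1 - α)) * exp (-(x - μ) ^ 2 / (2 * v) * α
        + -(x - (μ + m)) ^ 2 / (2 * v) * (1 - α)) by rw [rpow_add hC, exp_add]; ring,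
    add_sub_cancel, rpow_one, mul_left_comm, ← exp_add]
  congr 2
  field_simp
  ring

theorem lintegral_gaussianPDF_rpow_mul_rpow (hv : v ≠ 0) (α : ℝ) :
    ∫⁻ x, gaussianPDF μ v x ^ α * gaussianPDF (μ + m) v x ^ (1 - α)
      = ENNReal.ofReal (exp ((α - 1) * (α * m ^ 2 / (2 * v)))) := by
  have h : ∀ x, gaussianPDF μ v x ^ α * gaussianPDF (μ + m) v x ^ (1 - α)
      = ENNReal.ofReal (exp ((α - 1) * (α * m ^ 2 / (2 * v))))
        * ENNReal.ofReal (gaussianPDFReal (μ + (1 - α) * m) v x) := fun x => by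
    rw [gaussianPDF, gaussianPDF, ENNReal.ofReal_rpow_of_pos (gaussianPDFReal_pos _ _ _ hv),
      ENNReal.ofReal_rpow_of_pos (gaussianPDFReal_pos _ _ _ hv),
      ← ENNReal.ofReal_mul (rpow_nonneg (gaussianPDFReal_nonneg _ _ _) _),
      gaussianPDFReal_rpow_mul_rpow μ m hv, ENNReal.ofReal_mul (exp_nonneg _)]
  simp_rw [h]
  rw [lintegral_const_mul _ (measurable_gaussianPDFReal _ _).ennreal_ofReal,
    lintegral_gaussianPDFReal_eq_one _ hv, mul_one]

theorem renyiDiv_gaussianReal_fiber_le {ι : Type*} [Fintype ι] [MeasurableSpace ι]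
    [MeasurableSingletonClass ι] (hv : v ≠ 0) {F : ℝ → ι} (hF : Measurable F) {α : ℝ}
    (hα0 : 0 < α) (hα1 : α ≠ 1) :
    renyiDiv α (fun j => (gaussianReal μ v).real (F ⁻¹' {j}))
      (fun j => (gaussianReal (μ + m) v).real (F ⁻¹' {j})) ≤ α * m ^ 2 / (2 * v) := by
  set Q := gaussianReal μ v
  set P := gaussianReal (μ + m) v
  have hQP : Q ≪ P := gaussianReal_absolutelyContinuous_gaussianReal μ (μ + m) hv
  have hT : ∑ j, Q (F ⁻¹' {j}) ^ α * P (F ⁻¹' {j}) ^ (1 - α) ≠ ∞ :=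
    ENNReal.sum_ne_top.2 fun j _ => rpow_mul_rpow_ne_top hQP hα0 _
  have hST : ∑ j, Q.real (F ⁻¹' {j}) ^ α * P.real (F ⁻¹' {j}) ^ (1 - α)
      = (∑ j, Q (F ⁻¹' {j}) ^ α * P (F ⁻¹' {j}) ^ (1 - α)).toReal := by
    rw [ENNReal.toReal_sum fun j _ => rpow_mul_rpow_ne_top hQP hα0 _]
    simp only [measureReal_def, ENNReal.toReal_mul, ENNReal.toReal_rpow]
  have hf := (measurable_gaussianPDF μ v).aemeasurable (μ := volume)
  have hg := (measurable_gaussianPDF (μ + m) v).aemeasurable (μ := volume)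
  rcases hα1.lt_or_gt with hα1 | hα1
  · have h := lintegral_rpow_mul_rpow_le_sum_fiber hF hα0 hα1 hf hg
    simp_rw [lintegral_gaussianPDF_rpow_mul_rpow μ m hv, ← gaussianReal_apply _ hv] at h
    refine renyiDiv_le_of_exp_le hα1 ?_
    rw [hST]
    exact (ENNReal.ofReal_le_iff_le_toReal hT).1 h
  · have h := sum_fiber_le_lintegral_rpow_mul_rpow hF hα1 hf hg
      (fun x => (gaussianPDF_pos _ hv x).ne') (fun _ => ENNReal.ofReal_ne_top)
    simp_rw [lintegral_gaussianPDF_rpow_mul_rpow μ m hv, ← gaussianReal_apply _ hv] at h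
    refine renyiDiv_le_of_le_exp hα1 (by positivity) (fun _ => measureReal_nonneg)
      (fun _ => measureReal_nonneg) ?_
    rw [hST]
    exact ENNReal.toReal_le_of_le_ofReal (exp_pos _).le h

end Gaussian

end CertifiedRobustness

open CertifiedRobustness

theorem certified_robustness_bound_univariate_general (k : ℕ)
    (F : ℝ → Fin k) (hF : Measurable F) (X μP : ℝ) (σ2 : NNReal) (hσ : 0 < σ2)
    (p p0 : Fin k → ℝ)
    (hp : ∀ j, p j = ((gaussianReal (X + μP) σ2) {z | F z = j}).toReal)
    (hp0 : ∀ j, p0 j = ((gaussianReal X σ2) {z | F z = j}).toReal)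
    (j₁ : Fin k) (hmax : ∀ j, j ≠ j₁ → p j < p j₁)
    (p₂ : ℝ) (hp₂ : IsGreatest (p '' {j | j ≠ j₁}) p₂)
    (hdiv : ∃ α : ℝ, 0 < α ∧ α ≠ 1 ∧
      α * μP ^ 2 / (2 * (σ2 : ℝ)) <
        -Real.log (1 - p j₁ - p₂ +
          2 * ((p j₁ ^ (1 - α) + p₂ ^ (1 - α)) / 2) ^ (1 / (1 - α)))) :
    ∀ j, p0 j ≤ p0 j₁ := by
  obtain ⟨α, hα0, hα1, hD⟩ := hdiv
  obtain rfl : p = fun j => (gaussianReal (X + μP) σ2).real (F ⁻¹' {j}) := funext hp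
  obtain rfl : p0 = fun j => (gaussianReal X σ2).real (F ⁻¹' {j}) := funext hp0
  refine le_of_renyiDiv_lt_neg_log_robustnessBound hα0 hα1 (fun _ => measureReal_nonneg)
    (fun _ => measureReal_nonneg) (fun j h => ?_) (sum_measureReal_fiber _ hF)
    (sum_measureReal_fiber _ hF) (fun j hj => hp₂.2 ⟨j, hj, rfl⟩) ?_
    ((renyiDiv_gaussianReal_fiber_le X μP hσ.ne' hF hα0 hα1).trans_lt hD)
  · rw [measureReal_eq_zero_iff] at h ⊢
    exact gaussianReal_absolutelyContinuous_gaussianReal X (X + μP) hσ.ne' h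
  · obtain ⟨j, hj, rfl⟩ := hp₂.1
    exact hmax j hj

/-- univariate instance of the paper's Theorem 2: if
`α·μ_P²/(2σ²)` — the Rényi divergence between `N(X+μ_P, σ²)` and `N(X, σ²)` — is
below the discrete divergence bound computed from the label distribution `p` of `F`
under `N(X+μ_P, σ²)`, then the argmax label of `p` is also a maximizer of the label
distribution `p⁰` of `F` under `N(X, σ²)`. -/
theorem certified_robustness_bound_univariate (k : ℕ) (hk : 2 ≤ k)
    (F : ℝ → Fin k) (hF : Measurable F) (X μP : ℝ) (σ2 : NNReal) (hσ : 0 < σ2)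
    (p p0 : Fin k → ℝ)
    (hp : ∀ j, p j = ((gaussianReal (X + μP) σ2) {z | F z = j}).toReal)
    (hp0 : ∀ j, p0 j = ((gaussianReal X σ2) {z | F z = j}).toReal)
    (hp0pos : ∀ j, 0 < p0 j)
    (j₁ : Fin k) (hmax : ∀ j, j ≠ j₁ → p j < p j₁)
    (p₂ : ℝ) (hp₂ : IsGreatest (p '' {j | j ≠ j₁}) p₂) (hp₂pos : 0 < p₂)
    (hdiv : ∃ α : ℝ, 0 < α ∧ α ≠ 1 ∧
      α * μP ^ 2 / (2 * (σ2 : ℝ)) <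
        -Real.log (1 - p j₁ - p₂ +
          2 * ((p j₁ ^ (1 - α) + p₂ ^ (1 - α)) / 2) ^ (1 / (1 - α)))) :
    ∀ j, p0 j ≤ p0 j₁ :=
  certified_robustness_bound_univariate_general k F hF X μP σ2 hσ p p0 hp hp0 j₁ hmax p₂ hp₂ hdiv
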